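/- Fix n ≥ 1, a finite output type 𝒪, and a Markov kernel κ assigning to each s ∈ (Fin n → Bool) a probability mass function κ(s) on 𝒪. Let S be uniform on (Fin n → Bool) and, given S = s, let O be distributed as κ(s). For each i and o, let p⁺_i(o) := 2^{−(n−1)} ∑_{s : s(i) = true} κ(s)(o) and p⁻_i(o) := 2^{−(n−1)} ∑_{s : s(i) = false} κ(s)(o). Then the supremum over all guessers G : 𝒪 → (Fin n → Bool) of the efficacy (1/n) ∑_{i} Pr[G(O)(i) = S(i)] equals 1/2 + (1/(2n)) ∑_{i} D_TV(p⁺_i, p⁻_i), where D_TV(p⁺_i, p⁻_i) := (1/2) ∑_{o ∈ 𝒪} |p⁺_i(o) − p⁻_i(o)| is the total variation distance between the two conditional output distributions. -/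

import Mathlib

open Finset

/-- The conditional output distribution `p^b_i(o) = 2^{-(n-1)} ∑_{s : s i = b} κ s o`. -/
noncomputable def pCond {O : Type*} [Fintype O] (n : ℕ) (κ : (Fin n → Bool) → O → ℝ)
    (i : Fin n) (b : Bool) (o : O) : ℝ :=
  (1 / 2 ^ (n - 1)) * ∑ s : Fin n → Bool, if s i = b then κ s o else 0

/-- `Pr[G(O)(i) = S(i)]` where `S` is uniform on `Fin n → Bool` and `O ~ κ S`. -/
noncomputable def prCorrect {O : Type*} [Fintype O] (n : ℕ) (κ : (Fin n → Bool) → O → ℝ)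
    (G : O → Fin n → Bool) (i : Fin n) : ℝ :=
  (1 / 2 ^ n) * ∑ s : Fin n → Bool, ∑ o : O, κ s o * (if G o i = s i then 1 else 0)

/-- The efficacy of a guesser without abstentions. -/
noncomputable def efficacy {O : Type*} [Fintype O] (n : ℕ) (κ : (Fin n → Bool) → O → ℝ)
    (G : O → Fin n → Bool) : ℝ :=
  (1 / n) * ∑ i : Fin n, prCorrect n κ G i

/-
For each coordinate `i`, `Pr[G(O)(i) = S(i)] = ½ ∑ₒ p^{G(o)(i)}_i(o)`, so the best guess for `S(i)`
after seeing `o` is the `b` maximizing `p^b_i(o)` (maximum a posteriori), and the optimal success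
probability is `½ ∑ₒ max(p⁺_i(o), p⁻_i(o)) = ½ + ½ D_TV(p⁺_i, p⁻_i)`, using
`max(a, b) = (a + b + |a - b|)/2` and that both conditional distributions have mass one.
The supremum is attained by this coordinatewise MAP guesser.
-/

lemma card_filter_apply_eq {ι : Type*} [Fintype ι] [DecidableEq ι] (i : ι) (b : Bool) :
    #{s : ι → Bool | s i = b} = 2 ^ (Fintype.card ι - 1) := by
  have := Fintype.card_filter_piFinset_const_eq_of_mem (univ : Finset Bool) i (mem_univ b)
  rwa [Fintype.piFinset_univ, card_univ, Fintype.card_bool] at this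

lemma sum_max_eq {α : Type*} (s : Finset α) (p q : α → ℝ) :
    ∑ x ∈ s, max (p x) (q x) = (∑ x ∈ s, p x + ∑ x ∈ s, q x + ∑ x ∈ s, |p x - q x|) / 2 := by
  rw [← sum_add_distrib, ← sum_add_distrib, sum_div]
  refine sum_congr rfl fun x _ => ?_
  rcases le_total (p x) (q x) with h | h
  · rw [max_eq_right h, abs_of_nonpos (by linarith)]; ring
  · rw [max_eq_left h, abs_of_nonneg (by linarith)]; ring

section

variable {O : Type*} [Fintype O] {n : ℕ} (κ : (Fin n → Bool) → O → ℝ)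

lemma sum_pCond_eq_one (hκ1 : ∀ s, ∑ o : O, κ s o = 1) (i : Fin n) (b : Bool) :
    ∑ o : O, pCond n κ i b o = 1 := by
  simp_rw [pCond, ← mul_sum, ← sum_filter]
  rw [sum_comm]
  simp_rw [hκ1]
  rw [sum_const, card_filter_apply_eq, Fintype.card_fin, nsmul_one]
  simp

lemma prCorrect_eq_half_sum_pCond (G : O → Fin n → Bool) (i : Fin n) :
    prCorrect n κ G i = 1 / 2 * ∑ o : O, pCond n κ i (G o i) o := by
  have hpow : (1 : ℝ) / 2 ^ n = 1 / 2 * (1 / 2 ^ (n - 1)) := by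
    rw [one_div_mul_one_div, ← pow_succ', Nat.sub_add_cancel i.pos]
  simp only [prCorrect, pCond, mul_boole, mul_sum, hpow, mul_assoc, eq_comm (a := G _ i)]
  exact sum_comm

/-- The coordinatewise maximum a posteriori guesser. -/
noncomputable def mapGuesser : O → Fin n → Bool :=
  fun o i => decide (pCond n κ i false o ≤ pCond n κ i true o)

lemma pCond_mapGuesser (o : O) (i : Fin n) :
    pCond n κ i (mapGuesser κ o i) o = max (pCond n κ i true o) (pCond n κ i false o) := by
  by_cases h : pCond n κ i false o ≤ pCond n κ i true o
  · simp [mapGuesser, h]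
  · simp [mapGuesser, h, max_eq_right (le_of_not_ge h)]

lemma prCorrect_le_prCorrect_mapGuesser (G : O → Fin n → Bool) (i : Fin n) :
    prCorrect n κ G i ≤ prCorrect n κ (mapGuesser κ) i := by
  simp_rw [prCorrect_eq_half_sum_pCond, pCond_mapGuesser]
  gcongr with o
  cases G o i
  · exact le_max_right _ _
  · exact le_max_left _ _

lemma prCorrect_mapGuesser (hκ1 : ∀ s, ∑ o : O, κ s o = 1) (i : Fin n) :
    prCorrect n κ (mapGuesser κ) i =
      1 / 2 + 1 / 4 * ∑ o : O, |pCond n κ i true o - pCond n κ i false o| := by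
  rw [prCorrect_eq_half_sum_pCond, sum_congr rfl fun o _ => pCond_mapGuesser κ o i, sum_max_eq,
    sum_pCond_eq_one κ hκ1, sum_pCond_eq_one κ hκ1]
  ring

lemma efficacy_le_efficacy_mapGuesser (G : O → Fin n → Bool) :
    efficacy n κ G ≤ efficacy n κ (mapGuesser κ) := by
  unfold efficacy
  gcongr with i
  exact prCorrect_le_prCorrect_mapGuesser κ G i

end

theorem stmt8_general (n : ℕ) (hn : 1 ≤ n) (O : Type*) [Fintype O]
    (κ : (Fin n → Bool) → O → ℝ) (hκ1 : ∀ s, ∑ o : O, κ s o = 1) :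
    sSup {x : ℝ | ∃ G : O → Fin n → Bool, x = efficacy n κ G} =
      1 / 2 + (1 / (2 * n)) * ∑ i : Fin n,
        (1 / 2) * ∑ o : O, |pCond n κ i true o - pCond n κ i false o| := by
  have hgreatest : IsGreatest {x : ℝ | ∃ G : O → Fin n → Bool, x = efficacy n κ G}
      (efficacy n κ (mapGuesser κ)) :=
    ⟨⟨_, rfl⟩, by rintro _ ⟨G, rfl⟩; exact efficacy_le_efficacy_mapGuesser κ G⟩
  have hn0 : (n : ℝ) ≠ 0 := by positivity
  rw [hgreatest.csSup_eq, efficacy, sum_congr rfl fun i _ => prCorrect_mapGuesser κ hκ1 i,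
    sum_add_distrib, sum_const, card_univ, Fintype.card_fin, ← mul_sum, ← mul_sum]
  field_simp
  ring

theorem stmt8 (n : ℕ) (hn : 1 ≤ n) (O : Type*) [Fintype O]
    (κ : (Fin n → Bool) → O → ℝ) (hκ0 : ∀ s o, 0 ≤ κ s o) (hκ1 : ∀ s, ∑ o : O, κ s o = 1) :
    sSup {x : ℝ | ∃ G : O → Fin n → Bool, x = efficacy n κ G} =
      1 / 2 + (1 / (2 * n)) * ∑ i : Fin n,
        (1 / 2) * ∑ o : O, |pCond n κ i true o - pCond n κ i false o| :=
  stmt8_general n hn O κ hκ1
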